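/- Fix L ≥ 2 targets indexed by l ∈ {1,…,L} with a distinguished index a, and for each l fix real matrices F_l, Q_l (m×m, Q_l symmetric positive definite), H_l (p×m), R_l (p×p, symmetric positive definite), a detection probability p_l ∈ [0,1], nonnegative constants α_l, β_l ≥ 0, and a constant c ∈ ℝ. For an m×m symmetric positive definite matrix P and b ∈ {0,1}, define Φ_l(P,b) = F_l P F_lᵀ + Q_l − b · F_l P H_lᵀ (H_l P H_lᵀ + R_l)⁻¹ H_l P F_lᵀ and L_l(P) = F_l P F_lᵀ + Q_l. For a state (P, P̄) consisting of two L-tuples of m×m symmetric positive definite matrices and a detection pattern b ∈ {0,1}^L with probability weight q(b) = ∏_l (p_l if b_l = 1 else 1 − p_l), let T(P, P̄, b) be the state with components (Φ_l(P_l, b_l), L_l(P̄_l)). Define the stopping cost C̄(P, P̄) = −α_a log det P̄_a + β_a log det P_a + Σ_{l≠a} (α_l log det P̄_l − β_l log det P_l) and C(P, P̄) = c − C̄(P, P̄) + Σ_{b∈{0,1}^L} q(b) · C̄(T(P, P̄, b)). Then C is monotone in the following sense with respect to the Loewner order (all other components held fixed): C is decreasing in P_a, decreasing in P̄_l for every l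 ≠ a, increasing in P_l for every l ≠ a, and increasing in P̄_a. -/

import Mathlib

/-!
Every covariance update is of information form `Φ(P) = F (P⁻¹ + J)⁻¹ Fᵀ + Q`: by the Woodbury
identity the Riccati update is the case `J = Hᵀ R⁻¹ H`, and the Lyapunov update the case `J = 0`.
The matrix determinant lemma gives
`log det Φ(P) - log det P = log det Q + log det (P⁻¹ + J + Fᵀ Q⁻¹ F) - log det (1 + J P)`.
When `P` grows in the Loewner order, `P⁻¹` shrinks, so the first determinant decreases, and the
second one increases; hence `log det Φ(P) - log det P` is antitone in `P`.
The cost `C` is affine in every `log det P_l` and `log det P̄_l`, with a sign depending on whether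
`l = a`, so moving a single component changes `C` by `± β_l` (or `± α_l`) times a (detection-
averaged) increment of this antitone quantity, which has a definite sign.
-/

open Matrix

/-- Riccati/Lyapunov covariance update for one target: with a received measurement
(`b = true`) this is the Riccati update, otherwise the Lyapunov (predictor) update. -/
noncomputable def kalmanUpdate {m p : ℕ}
    (F Q : Matrix (Fin m) (Fin m) ℝ) (H : Matrix (Fin p) (Fin m) ℝ)
    (R : Matrix (Fin p) (Fin p) ℝ) (P : Matrix (Fin m) (Fin m) ℝ) (b : Bool) :
    Matrix (Fin m) (Fin m) ℝ :=
  F * P * Fᵀ + Q - if b then F * P * Hᵀ * (H * P * Hᵀ + R)⁻¹ * H * P * Fᵀ else 0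

/-- Lyapunov (measurement-free predictor) covariance update. -/
noncomputable def lyapUpdate {m : ℕ}
    (F Q P : Matrix (Fin m) (Fin m) ℝ) : Matrix (Fin m) (Fin m) ℝ :=
  F * P * Fᵀ + Q

/-- Probability weight of a detection pattern `b : Fin L → Bool`. -/
noncomputable def detWeight {L : ℕ} (pd : Fin L → ℝ) (b : Fin L → Bool) : ℝ :=
  ∏ l, if b l then pd l else 1 - pd l

/-- Stopping cost `C̄(P, P̄)` (mutual-information based stochastic observability cost). -/
noncomputable def stopCost {L m : ℕ} (a : Fin L) (α β : Fin L → ℝ)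
    (P Pbar : Fin L → Matrix (Fin m) (Fin m) ℝ) : ℝ :=
  - α a * Real.log (Pbar a).det + β a * Real.log (P a).det
    + ∑ l ∈ Finset.univ.erase a,
        (α l * Real.log (Pbar l).det - β l * Real.log (P l).det)

/-- The one-step continuation cost
`C(P, P̄) = c − C̄(P, P̄) + Σ_b q(b) C̄(T(P, P̄, b))`. -/
noncomputable def contCost {L m p : ℕ} (a : Fin L) (α β : Fin L → ℝ) (c : ℝ)
    (F Q : Fin L → Matrix (Fin m) (Fin m) ℝ)
    (H : Fin L → Matrix (Fin p) (Fin m) ℝ)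
    (R : Fin L → Matrix (Fin p) (Fin p) ℝ) (pd : Fin L → ℝ)
    (P Pbar : Fin L → Matrix (Fin m) (Fin m) ℝ) : ℝ :=
  c - stopCost a α β P Pbar
    + ∑ b : Fin L → Bool,
        detWeight pd b *
          stopCost a α β
            (fun l => kalmanUpdate (F l) (Q l) (H l) (R l) (P l) (b l))
            (fun l => lyapUpdate (F l) (Q l) (Pbar l))

open Real

namespace Matrix

lemma det_mul_mul_transpose_add {R n k : Type*} [CommRing R] [Fintype n] [DecidableEq n]
    [Fintype k] [DecidableEq k] (F : Matrix n k R) {S : Matrix k k R} {Q : Matrix n n R}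
    (hS : IsUnit S.det) (hQ : IsUnit Q.det) :
    (F * S * Fᵀ + Q).det = Q.det * (S⁻¹ + Fᵀ * Q⁻¹ * F).det * S.det := by
  rw [add_comm, det_add_mul _ _ hQ, mul_assoc, ← det_mul, Matrix.add_mul,
    nonsing_inv_mul _ hS]
  simp only [Matrix.mul_assoc]

variable {n k : Type*} [Fintype n] [Fintype k]

lemma PosSemidef.mul_mul_transpose_same {A : Matrix n n ℝ} (hA : A.PosSemidef)
    (B : Matrix k n ℝ) : (B * A * Bᵀ).PosSemidef := by
  simpa using hA.mul_mul_conjTranspose_same B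

variable [DecidableEq n]

open scoped MatrixOrder in
lemma PosSemidef.exists_eq_transpose_mul_self {S : Matrix n n ℝ} (hS : S.PosSemidef) :
    ∃ B : Matrix n n ℝ, S = Bᵀ * B := by
  obtain ⟨B, hB⟩ := CStarAlgebra.nonneg_iff_eq_star_mul_self.mp hS.nonneg
  exact ⟨B, by rwa [star_eq_conjTranspose, conjTranspose_eq_transpose_of_trivial] at hB⟩

lemma PosSemidef.one_le_det_one_add {N : Matrix n n ℝ} (hN : N.PosSemidef) :
    1 ≤ (1 + N).det := by
  set U := hN.1.eigenvectorUnitary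
  have hconj : 1 + N = Unitary.conjStarAlgAut ℝ _ U (diagonal (1 + hN.1.eigenvalues)) := by
    conv_lhs => rw [hN.1.spectral_theorem, ← map_one (Unitary.conjStarAlgAut ℝ _ U), ← map_add]
    congr 1
    rw [← diagonal_one, diagonal_add]
    rfl
  rw [hconj, Unitary.conjStarAlgAut_apply, det_mul, det_mul, mul_right_comm, ← det_mul,
    mem_unitaryGroup_iff.mp U.2, det_one, one_mul, det_diagonal]
  exact Finset.one_le_prod fun i _ => by simpa using hN.eigenvalues_nonneg i

lemma PosSemidef.one_le_det_one_add_mul {N S : Matrix n n ℝ} (hN : N.PosSemidef)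
    (hS : S.PosSemidef) : 1 ≤ (1 + N * S).det := by
  obtain ⟨B, rfl⟩ := hS.exists_eq_transpose_mul_self
  rw [← Matrix.mul_assoc, det_one_add_mul_comm, ← Matrix.mul_assoc]
  exact (hN.mul_mul_transpose_same B).one_le_det_one_add

lemma PosDef.det_le_det {A B : Matrix n n ℝ} (hA : A.PosDef) (hAB : (B - A).PosSemidef) :
    A.det ≤ B.det := by
  have hB : B = A + 1 * (B - A) := by rw [Matrix.one_mul, add_sub_cancel]
  rw [hB, det_add_mul _ _ hA.det_pos.ne'.isUnit, Matrix.mul_one]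
  exact le_mul_of_one_le_right hA.det_pos.le (hAB.one_le_det_one_add_mul hA.inv.posSemidef)

lemma PosDef.posSemidef_inv_sub_inv {A B : Matrix n n ℝ} (hA : A.PosDef) (hB : B.PosDef)
    (hAB : (B - A).PosSemidef) : (A⁻¹ - B⁻¹).PosSemidef := by
  have := hA.inv.isUnit.invertible
  have := hB.isUnit.invertible
  have hblock : (fromBlocks B 1 1ᴴ A⁻¹).PosSemidef := (PosDef.fromBlocks₂₂ B 1 hA.inv).2 <| by
    rwa [conjTranspose_one, Matrix.mul_one, Matrix.one_mul,
      nonsing_inv_nonsing_inv A hA.det_pos.ne'.isUnit]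
  simpa using (PosDef.fromBlocks₁₁ 1 A⁻¹ hB).1 hblock

lemma PosSemidef.det_one_add_mul_le {J P X : Matrix n n ℝ} (hJ : J.PosSemidef) (hP : P.PosSemidef)
    (hPX : (X - P).PosSemidef) : (1 + J * P).det ≤ (1 + J * X).det := by
  obtain ⟨B, rfl⟩ := hJ.exists_eq_transpose_mul_self
  rw [Matrix.mul_assoc, Matrix.mul_assoc, det_one_add_mul_comm Bᵀ, det_one_add_mul_comm Bᵀ]
  refine PosDef.det_le_det (PosDef.one.add_posSemidef (hP.mul_mul_transpose_same B)) ?_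
  rw [show 1 + B * X * Bᵀ - (1 + B * P * Bᵀ) = B * (X - P) * Bᵀ by noncomm_ring]
  exact hPX.mul_mul_transpose_same B

end Matrix

noncomputable def infoFormUpdate {n k : Type*} [Fintype k] [DecidableEq k]
    (F : Matrix n k ℝ) (Q : Matrix n n ℝ) (J P : Matrix k k ℝ) : Matrix n n ℝ :=
  F * (P⁻¹ + J)⁻¹ * Fᵀ + Q

section InfoFormUpdate


variable {n k : Type*} [Fintype n] [DecidableEq n] [Fintype k] [DecidableEq k]
  {F : Matrix n k ℝ} {Q : Matrix n n ℝ} {J P X : Matrix k k ℝ}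

omit [DecidableEq n] in
lemma posDef_infoFormUpdate (hQ : Q.PosDef) (hJ : J.PosSemidef) (hP : P.PosDef) :
    (infoFormUpdate F Q J P).PosDef :=
  hQ.posSemidef_add ((hP.inv.add_posSemidef hJ).inv.posSemidef.mul_mul_transpose_same F)

lemma det_infoFormUpdate_mul (hQ : Q.PosDef) (hJ : J.PosSemidef) (hP : P.PosDef) :
    (infoFormUpdate F Q J P).det * (1 + J * P).det
      = Q.det * (P⁻¹ + J + Fᵀ * Q⁻¹ * F).det * P.det := by
  have hPJ : IsUnit (P⁻¹ + J).det := (hP.inv.add_posSemidef hJ).det_pos.ne'.isUnit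
  have hinv : (P⁻¹ + J)⁻¹.det * (P⁻¹ + J).det = 1 := by
    rw [← det_mul, nonsing_inv_mul _ hPJ, det_one]
  have hfactor : (1 + J * P).det = (P⁻¹ + J).det * P.det := by
    rw [← det_mul, Matrix.add_mul, nonsing_inv_mul _ hP.det_pos.ne'.isUnit]
  rw [infoFormUpdate, det_mul_mul_transpose_add F ((isUnit_nonsing_inv_det_iff).2 hPJ)
    hQ.det_pos.ne'.isUnit, nonsing_inv_nonsing_inv _ hPJ, hfactor]
  linear_combination (Q.det * (P⁻¹ + J + Fᵀ * Q⁻¹ * F).det * P.det) * hinv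

lemma log_det_infoFormUpdate_sub_log_det (hQ : Q.PosDef) (hJ : J.PosSemidef) (hP : P.PosDef) :
    log (infoFormUpdate F Q J P).det - log P.det
      = log Q.det + log (P⁻¹ + J + Fᵀ * Q⁻¹ * F).det - log (1 + J * P).det := by
  have hG : (Fᵀ * Q⁻¹ * F).PosSemidef := by
    simpa using hQ.inv.posSemidef.mul_mul_transpose_same Fᵀ
  have hlog := congrArg log (det_infoFormUpdate_mul (F := F) hQ hJ hP)
  rw [log_mul (posDef_infoFormUpdate hQ hJ hP).det_pos.ne'
      (one_pos.trans_le (hJ.one_le_det_one_add_mul hP.posSemidef)).ne',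
    log_mul (mul_pos hQ.det_pos ((hP.inv.add_posSemidef hJ).add_posSemidef hG).det_pos).ne'
      hP.det_pos.ne',
    log_mul hQ.det_pos.ne' ((hP.inv.add_posSemidef hJ).add_posSemidef hG).det_pos.ne'] at hlog
  linarith

lemma log_det_infoFormUpdate_sub_log_det_antitone (hQ : Q.PosDef) (hJ : J.PosSemidef)
    (hP : P.PosDef) (hX : X.PosDef) (hPX : (X - P).PosSemidef) :
    log (infoFormUpdate F Q J X).det - log X.det
      ≤ log (infoFormUpdate F Q J P).det - log P.det := by
  have hG : (Fᵀ * Q⁻¹ * F).PosSemidef := by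
    simpa using hQ.inv.posSemidef.mul_mul_transpose_same Fᵀ
  have hXJG := (hX.inv.add_posSemidef hJ).add_posSemidef hG
  have hinfo : (P⁻¹ + J + Fᵀ * Q⁻¹ * F) - (X⁻¹ + J + Fᵀ * Q⁻¹ * F) = P⁻¹ - X⁻¹ := by abel
  have hgain : log (X⁻¹ + J + Fᵀ * Q⁻¹ * F).det ≤ log (P⁻¹ + J + Fᵀ * Q⁻¹ * F).det :=
    log_le_log hXJG.det_pos <| hXJG.det_le_det <| hinfo ▸ hP.posSemidef_inv_sub_inv hX hPX
  have hloss : log (1 + J * P).det ≤ log (1 + J * X).det :=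
    log_le_log (one_pos.trans_le (hJ.one_le_det_one_add_mul hP.posSemidef))
      (hJ.det_one_add_mul_le hP.posSemidef hPX)
  rw [log_det_infoFormUpdate_sub_log_det hQ hJ hX, log_det_infoFormUpdate_sub_log_det hQ hJ hP]
  linarith

end InfoFormUpdate

noncomputable def measurementInfo {n q : Type*} [Fintype q] [DecidableEq q]
    (H : Matrix q n ℝ) (R : Matrix q q ℝ) (b : Bool) : Matrix n n ℝ :=
  if b then Hᵀ * R⁻¹ * H else 0

section KalmanUpdate


variable {m p : ℕ} {F Q : Matrix (Fin m) (Fin m) ℝ} {H : Matrix (Fin p) (Fin m) ℝ}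
  {R : Matrix (Fin p) (Fin p) ℝ} {P X : Matrix (Fin m) (Fin m) ℝ}

lemma posSemidef_measurementInfo (hR : R.PosDef) (b : Bool) :
    (measurementInfo H R b).PosSemidef := by
  cases b
  · exact PosSemidef.zero
  · simpa [measurementInfo] using hR.inv.posSemidef.mul_mul_transpose_same Hᵀ

lemma kalmanUpdate_eq_infoFormUpdate (hR : R.PosDef) (hP : P.PosDef) (b : Bool) :
    kalmanUpdate F Q H R P b = infoFormUpdate F Q (measurementInfo H R b) P := by
  have hPinv := nonsing_inv_nonsing_inv P hP.det_pos.ne'.isUnit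
  cases b
  · simp [kalmanUpdate, infoFormUpdate, measurementInfo, hPinv]
  · have hRinv := nonsing_inv_nonsing_inv R hR.det_pos.ne'.isUnit
    have hS : IsUnit (R⁻¹⁻¹ + H * P⁻¹⁻¹ * Hᵀ) := by
      rw [hPinv, hRinv]
      exact (hR.add_posSemidef (hP.posSemidef.mul_mul_transpose_same H)).isUnit
    simp only [kalmanUpdate, infoFormUpdate, measurementInfo, if_true]
    rw [add_mul_mul_inv_eq_sub _ _ _ _ hP.inv.isUnit hR.inv.isUnit hS, hPinv, hRinv, add_comm R]
    simp only [Matrix.mul_sub, Matrix.sub_mul, Matrix.mul_assoc]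
    abel

lemma lyapUpdate_eq_infoFormUpdate (hP : P.PosDef) :
    lyapUpdate F Q P = infoFormUpdate F Q 0 P := by
  simp [lyapUpdate, infoFormUpdate, nonsing_inv_nonsing_inv P hP.det_pos.ne'.isUnit]

lemma log_det_kalmanUpdate_sub_log_det_antitone (hQ : Q.PosDef) (hR : R.PosDef) (hP : P.PosDef)
    (hX : X.PosDef) (hPX : (X - P).PosSemidef) (b : Bool) :
    log (kalmanUpdate F Q H R X b).det - log X.det
      ≤ log (kalmanUpdate F Q H R P b).det - log P.det := by
  rw [kalmanUpdate_eq_infoFormUpdate hR hX, kalmanUpdate_eq_infoFormUpdate hR hP]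
  exact log_det_infoFormUpdate_sub_log_det_antitone hQ (posSemidef_measurementInfo hR b) hP hX hPX

lemma log_det_lyapUpdate_sub_log_det_antitone (hQ : Q.PosDef) (hP : P.PosDef) (hX : X.PosDef)
    (hPX : (X - P).PosSemidef) :
    log (lyapUpdate F Q X).det - log X.det ≤ log (lyapUpdate F Q P).det - log P.det := by
  rw [lyapUpdate_eq_infoFormUpdate hX, lyapUpdate_eq_infoFormUpdate hP]
  exact log_det_infoFormUpdate_sub_log_det_antitone hQ PosSemidef.zero hP hX hPX

end KalmanUpdate

lemma Fintype.sum_apply_update {ι G : Type*} [Fintype ι] [DecidableEq ι] [AddCommGroup G]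
    {M : ι → Type*} (f : ∀ i, M i → G) (x : ∀ i, M i) (j : ι) (y : M j) :
    ∑ i, f i (Function.update x j y i) = ∑ i, f i (x i) + (f j y - f j (x j)) := by
  rw [← Finset.add_sum_erase _ _ (Finset.mem_univ j),
    ← Finset.add_sum_erase _ (fun i => f i (x i)) (Finset.mem_univ j), Function.update_self,
    Finset.sum_congr rfl fun i hi => by rw [Function.update_of_ne (Finset.ne_of_mem_erase hi)]]
  abel

lemma detWeight_nonneg {L : ℕ} {pd : Fin L → ℝ} (hpd : ∀ l, pd l ∈ Set.Icc (0 : ℝ) 1)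
    (b : Fin L → Bool) : 0 ≤ detWeight pd b :=
  Finset.prod_nonneg fun l _ => by
    split
    · exact (hpd l).1
    · exact sub_nonneg.2 (hpd l).2

lemma sum_detWeight {L : ℕ} (pd : Fin L → ℝ) : ∑ b, detWeight pd b = 1 := by
  simp [detWeight, ← Fintype.prod_sum (fun l (y : Bool) => if y then pd l else 1 - pd l)]

lemma sum_detWeight_mul_log_det_kalmanUpdate_sub_le {L m p : ℕ} {pd : Fin L → ℝ}
    (hpd : ∀ l, pd l ∈ Set.Icc (0 : ℝ) 1) {F Q : Matrix (Fin m) (Fin m) ℝ}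
    {H : Matrix (Fin p) (Fin m) ℝ} {R : Matrix (Fin p) (Fin p) ℝ} (hQ : Q.PosDef)
    (hR : R.PosDef) {P X : Matrix (Fin m) (Fin m) ℝ} (hP : P.PosDef) (hX : X.PosDef)
    (hPX : (X - P).PosSemidef) (l : Fin L) :
    ∑ b : Fin L → Bool, detWeight pd b * (log (kalmanUpdate F Q H R X (b l)).det
        - log (kalmanUpdate F Q H R P (b l)).det)
      ≤ log X.det - log P.det :=
  calc _ ≤ ∑ b : Fin L → Bool, detWeight pd b * (log X.det - log P.det) := by
        refine Finset.sum_le_sum fun b _ => mul_le_mul_of_nonneg_left ?_ (detWeight_nonneg hpd b)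
        linarith [log_det_kalmanUpdate_sub_log_det_antitone (F := F) (H := H) hQ hR hP hX hPX (b l)]
    _ = log X.det - log P.det := by rw [← Finset.sum_mul, sum_detWeight, one_mul]

def stopCostSign {L : ℕ} (a l : Fin L) : ℝ := if l = a then 1 else -1

section ContCost


variable {L m p : ℕ} (a : Fin L) (α β : Fin L → ℝ) (c : ℝ)
  (F Q : Fin L → Matrix (Fin m) (Fin m) ℝ) (H : Fin L → Matrix (Fin p) (Fin m) ℝ)
  (R : Fin L → Matrix (Fin p) (Fin p) ℝ) (pd : Fin L → ℝ)
  (P Pbar : Fin L → Matrix (Fin m) (Fin m) ℝ) (l : Fin L) (X : Matrix (Fin m) (Fin m) ℝ)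

lemma stopCost_eq_sum : stopCost a α β P Pbar
    = ∑ l, stopCostSign a l * (β l * log (P l).det - α l * log (Pbar l).det) := by
  rw [stopCost, ← Finset.add_sum_erase _ _ (Finset.mem_univ a)]
  congr 1
  · rw [stopCostSign, if_pos rfl]
    ring
  · refine Finset.sum_congr rfl fun l hl => ?_
    rw [stopCostSign, if_neg (Finset.ne_of_mem_erase hl)]
    ring

lemma stopCost_update_P : stopCost a α β (Function.update P l X) Pbar
    = stopCost a α β P Pbar + stopCostSign a l * β l * (log X.det - log (P l).det) := by
  simp only [stopCost_eq_sum]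
  rw [Fintype.sum_apply_update
    (fun l (Y : Matrix (Fin m) (Fin m) ℝ) =>
      stopCostSign a l * (β l * log Y.det - α l * log (Pbar l).det)) P l X]
  ring

lemma stopCost_update_Pbar : stopCost a α β P (Function.update Pbar l X)
    = stopCost a α β P Pbar - stopCostSign a l * α l * (log X.det - log (Pbar l).det) := by
  simp only [stopCost_eq_sum]
  rw [Fintype.sum_apply_update
    (fun l (Y : Matrix (Fin m) (Fin m) ℝ) =>
      stopCostSign a l * (β l * log (P l).det - α l * log Y.det)) Pbar l X]
  ring

lemma contCost_update_P : contCost a α β c F Q H R pd (Function.update P l X) Pbar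
    = contCost a α β c F Q H R pd P Pbar + stopCostSign a l * β l *
        (∑ b, detWeight pd b * (log (kalmanUpdate (F l) (Q l) (H l) (R l) X (b l)).det
            - log (kalmanUpdate (F l) (Q l) (H l) (R l) (P l) (b l)).det)
          - (log X.det - log (P l).det)) := by
  have hT : ∀ b : Fin L → Bool,
      (fun k => kalmanUpdate (F k) (Q k) (H k) (R k) (Function.update P l X k) (b k))
        = Function.update (fun k => kalmanUpdate (F k) (Q k) (H k) (R k) (P k) (b k)) l
            (kalmanUpdate (F l) (Q l) (H l) (R l) X (b l)) := fun b =>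
    funext <| Function.apply_update (fun k Y => kalmanUpdate (F k) (Q k) (H k) (R k) Y (b k)) P l X
  simp only [contCost, hT, stopCost_update_P, mul_add, Finset.sum_add_distrib,
    mul_left_comm (detWeight pd _), ← Finset.mul_sum]
  ring

lemma contCost_update_Pbar : contCost a α β c F Q H R pd P (Function.update Pbar l X)
    = contCost a α β c F Q H R pd P Pbar - stopCostSign a l * α l *
        (log (lyapUpdate (F l) (Q l) X).det - log (lyapUpdate (F l) (Q l) (Pbar l)).det
          - (log X.det - log (Pbar l).det)) := by
  have hT : (fun k => lyapUpdate (F k) (Q k) (Function.update Pbar l X k))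
      = Function.update (fun k => lyapUpdate (F k) (Q k) (Pbar k)) l (lyapUpdate (F l) (Q l) X) :=
    funext <| Function.apply_update (fun k => lyapUpdate (F k) (Q k)) Pbar l X
  simp only [contCost, hT, stopCost_update_Pbar, mul_sub, Finset.sum_sub_distrib,
    ← Finset.sum_mul, sum_detWeight, one_mul]
  ring

end ContCost

theorem contCost_monotone_general {L m p : ℕ} (a : Fin L)
    (α β : Fin L → ℝ) (hα : ∀ l, 0 ≤ α l) (hβ : ∀ l, 0 ≤ β l) (c : ℝ)
    (F Q : Fin L → Matrix (Fin m) (Fin m) ℝ)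
    (H : Fin L → Matrix (Fin p) (Fin m) ℝ)
    (R : Fin L → Matrix (Fin p) (Fin p) ℝ)
    (hQ : ∀ l, (Q l).PosDef) (hR : ∀ l, (R l).PosDef)
    (pd : Fin L → ℝ) (hpd : ∀ l, pd l ∈ Set.Icc (0 : ℝ) 1)
    (P Pbar : Fin L → Matrix (Fin m) (Fin m) ℝ)
    (hP : ∀ l, (P l).PosDef) (hPbar : ∀ l, (Pbar l).PosDef) :
    (∀ X : Matrix (Fin m) (Fin m) ℝ, X.PosDef → (X - P a).PosSemidef →
        contCost a α β c F Q H R pd (Function.update P a X) Pbar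
          ≤ contCost a α β c F Q H R pd P Pbar) ∧
    (∀ l : Fin L, l ≠ a → ∀ X : Matrix (Fin m) (Fin m) ℝ, X.PosDef →
        (X - Pbar l).PosSemidef →
        contCost a α β c F Q H R pd P (Function.update Pbar l X)
          ≤ contCost a α β c F Q H R pd P Pbar) ∧
    (∀ l : Fin L, l ≠ a → ∀ X : Matrix (Fin m) (Fin m) ℝ, X.PosDef →
        (X - P l).PosSemidef →
        contCost a α β c F Q H R pd P Pbar
          ≤ contCost a α β c F Q H R pd (Function.update P l X) Pbar) ∧
    (∀ X : Matrix (Fin m) (Fin m) ℝ, X.PosDef → (X - Pbar a).PosSemidef →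
        contCost a α β c F Q H R pd P Pbar
          ≤ contCost a α β c F Q H R pd P (Function.update Pbar a X)) := by
  have hRiccati := fun l X (hX : X.PosDef) (hPX : (X - P l).PosSemidef) =>
    sum_detWeight_mul_log_det_kalmanUpdate_sub_le (F := F l) (H := H l) hpd (hQ l) (hR l) (hP l)
      hX hPX l
  have hLyap : ∀ l X, X.PosDef → (X - Pbar l).PosSemidef →
      log (lyapUpdate (F l) (Q l) X).det - log (lyapUpdate (F l) (Q l) (Pbar l)).det
        ≤ log X.det - log (Pbar l).det := fun l X hX hPX => by
    linarith [log_det_lyapUpdate_sub_log_det_antitone (F := F l) (hQ l) (hPbar l) hX hPX]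
  refine ⟨fun X hX hPX => ?_, fun l hl X hX hPX => ?_, fun l hl X hX hPX => ?_,
    fun X hX hPX => ?_⟩
  · rw [contCost_update_P, stopCostSign, if_pos rfl]
    linarith [mul_nonpos_of_nonneg_of_nonpos (hβ a) (sub_nonpos.2 (hRiccati a X hX hPX))]
  · rw [contCost_update_Pbar, stopCostSign, if_neg hl]
    linarith [mul_nonpos_of_nonneg_of_nonpos (hα l) (sub_nonpos.2 (hLyap l X hX hPX))]
  · rw [contCost_update_P, stopCostSign, if_neg hl]
    linarith [mul_nonpos_of_nonneg_of_nonpos (hβ l) (sub_nonpos.2 (hRiccati l X hX hPX))]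
  · rw [contCost_update_Pbar, stopCostSign, if_pos rfl]
    linarith [mul_nonpos_of_nonneg_of_nonpos (hα a) (sub_nonpos.2 (hLyap a X hX hPX))]

/-- The continuation cost `C(P, P̄)` is, with respect to the Loewner order and with
all other components held fixed: decreasing in `P_a`, decreasing in `P̄_l` for `l ≠ a`,
increasing in `P_l` for `l ≠ a`, and increasing in `P̄_a`. -/
theorem contCost_monotone {L m p : ℕ} (hL : 2 ≤ L) (a : Fin L)
    (α β : Fin L → ℝ) (hα : ∀ l, 0 ≤ α l) (hβ : ∀ l, 0 ≤ β l) (c : ℝ)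
    (F Q : Fin L → Matrix (Fin m) (Fin m) ℝ)
    (H : Fin L → Matrix (Fin p) (Fin m) ℝ)
    (R : Fin L → Matrix (Fin p) (Fin p) ℝ)
    (hQ : ∀ l, (Q l).PosDef) (hR : ∀ l, (R l).PosDef)
    (pd : Fin L → ℝ) (hpd : ∀ l, pd l ∈ Set.Icc (0 : ℝ) 1)
    (P Pbar : Fin L → Matrix (Fin m) (Fin m) ℝ)
    (hP : ∀ l, (P l).PosDef) (hPbar : ∀ l, (Pbar l).PosDef) :
    (∀ X : Matrix (Fin m) (Fin m) ℝ, X.PosDef → (X - P a).PosSemidef →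
        contCost a α β c F Q H R pd (Function.update P a X) Pbar
          ≤ contCost a α β c F Q H R pd P Pbar) ∧
    (∀ l : Fin L, l ≠ a → ∀ X : Matrix (Fin m) (Fin m) ℝ, X.PosDef →
        (X - Pbar l).PosSemidef →
        contCost a α β c F Q H R pd P (Function.update Pbar l X)
          ≤ contCost a α β c F Q H R pd P Pbar) ∧
    (∀ l : Fin L, l ≠ a → ∀ X : Matrix (Fin m) (Fin m) ℝ, X.PosDef →
        (X - P l).PosSemidef →
        contCost a α β c F Q H R pd P Pbar
          ≤ contCost a α β c F Q H R pd (Function.update P l X) Pbar) ∧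
    (∀ X : Matrix (Fin m) (Fin m) ℝ, X.PosDef → (X - Pbar a).PosSemidef →
        contCost a α β c F Q H R pd P Pbar
          ≤ contCost a α β c F Q H R pd P (Function.update Pbar a X)) :=
  contCost_monotone_general a α β hα hβ c F Q H R hQ hR pd hpd P Pbar hP hPbar
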